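/- arXiv:2511.23398 — 2 statements merged into one kernel-verified Lean document; each statement's English description precedes it below -/
import Mathlib

section
/- Let U be unitary and Π a projection in Mat_n(ℂ) satisfying Π U† Π U Π = U† Π U. Then U† Π U = Π, i.e., U commutes with Π. -/
open Matrix

lemma aux_trace_zero {n : ℕ} (A : Matrix (Fin n) (Fin n) ℂ)
    (h : (Aᴴ * A).trace = 0) : A = 0 := by
  have key : ((∑ i, ∑ j, Complex.normSq (A j i) : ℝ) : ℂ) = 0 := by
    rw [← h]
    simp [Matrix.trace, Matrix.diag, Matrix.mul_apply, Matrix.conjTranspose_apply,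
      Complex.normSq_eq_conj_mul_self]
  have key' : (∑ i, ∑ j, Complex.normSq (A j i) : ℝ) = 0 := by exact_mod_cast key
  have hzero : ∀ i ∈ Finset.univ, ∀ j ∈ Finset.univ, Complex.normSq (A j i) = 0 := by
    have h1 := (Finset.sum_eq_zero_iff_of_nonneg (fun i _ =>
      Finset.sum_nonneg fun j _ => Complex.normSq_nonneg _)).mp key'
    intro i hi j hj
    exact (Finset.sum_eq_zero_iff_of_nonneg fun j _ => Complex.normSq_nonneg _).mp
      (h1 i hi) j hj
  ext i j
  simpa using Complex.normSq_eq_zero.mp (hzero j (Finset.mem_univ _) i (Finset.mem_univ _))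

/-- If `U` is unitary and `Π` a projection in `Mat_n(ℂ)` with `Π U† Π U Π = U† Π U`,
then `U† Π U = Π`, i.e. `U` commutes with `Π`. -/
theorem conj_projection_fixed {n : ℕ}
    (U P : Matrix (Fin n) (Fin n) ℂ)
    (hU1 : U * Uᴴ = 1) (hU2 : Uᴴ * U = 1)
    (hP : P * P = P) (hPstar : Pᴴ = P)
    (h : P * (Uᴴ * P * U) * P = Uᴴ * P * U) :
    Uᴴ * P * U = P ∧ U * P = P * U := by
  set Q := Uᴴ * P * U with hQdef
  have hQ2 : Q * Q = Q := by
    calc Q * Q = Uᴴ * P * (U * Uᴴ) * P * U := by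
          simp only [hQdef, Matrix.mul_assoc]
      _ = Uᴴ * P * U := by
          rw [hU1]
          simp only [Matrix.mul_assoc, Matrix.one_mul]
          rw [← Matrix.mul_assoc P P U, hP]
  have hQstar : Qᴴ = Q := by
    simp [hQdef, Matrix.conjTranspose_mul, hPstar, Matrix.mul_assoc]
  have hQP : Q * P = Q := by
    calc Q * P = P * Q * P * P := by rw [h]
      _ = P * Q * (P * P) := by rw [Matrix.mul_assoc]
      _ = P * Q * P := by rw [hP]
      _ = Q := h
  have hPQ : P * Q = Q := by
    calc P * Q = P * (P * Q * P) := by rw [h]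
      _ = P * Q * P := by rw [← Matrix.mul_assoc, ← Matrix.mul_assoc, hP]
      _ = Q := h
  have hE : (P - Q) * (P - Q) = P - Q := by
    rw [Matrix.sub_mul, Matrix.mul_sub, Matrix.mul_sub, hP, hPQ, hQP, hQ2]
    abel
  have hEstar : (P - Q)ᴴ = P - Q := by
    rw [Matrix.conjTranspose_sub, hPstar, hQstar]
  have htr : ((P - Q)ᴴ * (P - Q)).trace = 0 := by
    rw [hEstar, hE, Matrix.trace_sub, hQdef, Matrix.trace_mul_cycle, hU1,
      Matrix.one_mul, sub_self]
  have hPQeq : Q = P := by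
    exact (sub_eq_zero.mp (aux_trace_zero _ htr)).symm
  constructor
  · exact hPQeq
  · have h1 : U * Q = U * P := by rw [hPQeq]
    rw [hQdef, ← Matrix.mul_assoc, ← Matrix.mul_assoc, hU1, Matrix.one_mul] at h1
    exact h1.symm
end

section
/- Let P be an idempotent in a tensor product algebra of the form P = Σ_μ λ_μ ⊗ ρ_μ with {λ_μ} and {ρ_μ} each linearly independent (a Schmidt decomposition). Then each λ_μ lies in the span of the products {λ_j λ_k} and each ρ_ν lies in the span of {ρ_j ρ_k}; i.e., there exist coefficients with λ_μ = Σ_{j,k} c_μ^{jk} λ_j λ_k and ρ_ν = Σ_{j,k} d_ν^{jk} ρ_j ρ_k. -/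
open scoped TensorProduct

lemma exists_dual_family {B : Type*} [AddCommGroup B] [Module ℂ B] {r : ℕ}
    (v : Fin r → B) (hv : LinearIndependent ℂ v) :
    ∃ g : Fin r → (B →ₗ[ℂ] ℂ), ∀ i j, g i (v j) = if j = i then 1 else 0 := by
  have h : ∀ i : Fin r, ∃ gi : B →ₗ[ℂ] ℂ,
      gi.comp (Submodule.span ℂ (Set.range v)).subtype =
        (Finsupp.lapply i).comp (hv.repr : _ →ₗ[ℂ] (Fin r →₀ ℂ)) := fun i =>
    LinearMap.exists_extend _
  choose g hg using h
  refine ⟨g, fun i j => ?_⟩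
  have hmem : v j ∈ Submodule.span ℂ (Set.range v) :=
    Submodule.subset_span ⟨j, rfl⟩
  have := congrArg (fun f => f ⟨v j, hmem⟩) (hg i)
  simp only [LinearMap.comp_apply, Submodule.subtype_apply] at this
  rw [this, hv.repr_eq_single j ⟨v j, hmem⟩ rfl]
  simp [Finsupp.lapply, Finsupp.single_apply]

/-- For an idempotent `P = Σ_μ λ_μ ⊗ ρ_μ` in `A ⊗ B` with each family `{λ_μ}`, `{ρ_μ}`
linearly independent (a Schmidt decomposition), every `λ_μ` lies in the span of the
products `λ_j λ_k` and every `ρ_ν` in the span of the products `ρ_j ρ_k`. -/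
theorem schmidt_idempotent_span {A B : Type*} [Ring A] [Ring B]
    [Algebra ℂ A] [Algebra ℂ B] {r : ℕ}
    (lam : Fin r → A) (rho : Fin r → B)
    (hlam : LinearIndependent ℂ lam) (hrho : LinearIndependent ℂ rho)
    (hP : (∑ i, lam i ⊗ₜ[ℂ] rho i) * (∑ i, lam i ⊗ₜ[ℂ] rho i) =
      ∑ i, lam i ⊗ₜ[ℂ] rho i) :
    ∃ c d : Fin r → Fin r → Fin r → ℂ,
      (∀ μ, lam μ = ∑ j, ∑ k, c μ j k • (lam j * lam k)) ∧
      (∀ ν, rho ν = ∑ j, ∑ k, d ν j k • (rho j * rho k)) := by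
  obtain ⟨f, hf⟩ := exists_dual_family lam hlam
  obtain ⟨g, hg⟩ := exists_dual_family rho hrho
  rw [Finset.sum_mul_sum] at hP
  simp only [Algebra.TensorProduct.tmul_mul_tmul] at hP
  refine ⟨fun μ j k => g μ (rho j * rho k), fun ν j k => f ν (lam j * lam k), ?_, ?_⟩
  · intro μ
    set F : A ⊗[ℂ] B →ₗ[ℂ] A :=
      TensorProduct.lift (((LinearMap.lsmul ℂ A).comp (g μ)).flip) with hFdef
    have hF : ∀ (a : A) (b : B), F (a ⊗ₜ[ℂ] b) = g μ b • a := fun a b => rfl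
    have h := congrArg F hP
    simp only [map_sum, hF] at h
    calc lam μ = ∑ x, g μ (rho x) • lam x := by simp [hg]
      _ = _ := h.symm
  · intro ν
    set G : A ⊗[ℂ] B →ₗ[ℂ] B :=
      TensorProduct.lift ((LinearMap.lsmul ℂ B).comp (f ν)) with hGdef
    have hG : ∀ (a : A) (b : B), G (a ⊗ₜ[ℂ] b) = f ν a • b := fun a b => rfl
    have h := congrArg G hP
    simp only [map_sum, hG] at h
    calc rho ν = ∑ x, f ν (lam x) • rho x := by simp [hf]
      _ = _ := h.symm
end
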